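/- For every p ≥ 3 and k ≥ 1, the largest eigenvalue of the lollipop L(p,k) is strictly greater than 2 and its second largest eigenvalue is strictly less than 2. -/

import Mathlib

open Polynomial

/-- The characteristic polynomial (over `ℝ`) of the adjacency matrix of a finite graph. -/
noncomputable def graphCharpoly {V : Type*} [Fintype V] [DecidableEq V]
    (G : SimpleGraph V) : Polynomial ℝ :=
  letI := Classical.decRel G.Adj
  (G.adjMatrix ℝ).charpoly

/-- `Q_{P_n}`: the characteristic polynomial of the path on `n` vertices. -/
noncomputable def Qpath (n : ℕ) : Polynomial ℝ := graphCharpoly (SimpleGraph.pathGraph n)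

/-- `Q_{C_n}`: the characteristic polynomial of the cycle on `n` vertices. -/
noncomputable def Qcycle (n : ℕ) : Polynomial ℝ := graphCharpoly (SimpleGraph.cycleGraph n)

/-- The lollipop `L(p,k)`: a cycle on `p` vertices with a path of `k` further
vertices attached to one cycle vertex. -/
def lollipop (p k : ℕ) : SimpleGraph (Fin p ⊕ Fin k) :=
  SimpleGraph.fromRel (fun a b =>
    match a, b with
    | Sum.inl i, Sum.inl j => ((i : ℕ) + 1) % p = (j : ℕ)
    | Sum.inl i, Sum.inr j => (i : ℕ) = 0 ∧ (j : ℕ) = 0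
    | Sum.inr i, Sum.inr j => (i : ℕ) + 1 = (j : ℕ)
    | _, _ => False)

/-- The adjacency matrix (over `ℝ`) of a finite graph. -/
noncomputable def adjMat {V : Type*} [Fintype V] [DecidableEq V]
    (G : SimpleGraph V) : Matrix V V ℝ :=
  letI := Classical.decRel G.Adj
  G.adjMatrix ℝ

/-!
Put `Q(x) = 2 ‖x‖² - ⟪x, A x⟫` for the adjacency matrix `A` of `L(p,k)`, and let `x₀` be the
value of `x` at the cycle vertex carrying the tail. Then
`Q(x) = Σ_cycle (x_u - x_v)² + Σ_tail (x_u - x_v)² + x_end² - x₀²`.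
On the hyperplane `x₀ = 0` this is positive unless `x = 0` (the graph is connected), so no plane
spanned by two orthonormal eigenvectors with eigenvalues `≥ 2` can exist: at most one eigenvalue
is `≥ 2`. The vector equal to `1` on the cycle and `1/2` on the tail has `Q = -1/2`, so some
eigenvalue is `> 2`.
-/

open Matrix

namespace Matrix.IsHermitian

variable {n : Type*} [Fintype n] [DecidableEq n] {A : Matrix n n ℝ} (hA : A.IsHermitian)

lemma dotProduct_eigenvectorBasis (i j : n) :
    ⇑(hA.eigenvectorBasis i) ⬝ᵥ ⇑(hA.eigenvectorBasis j) = if i = j then 1 else 0 := by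
  rw [dotProduct_comm]
  exact orthonormal_iff_ite.mp hA.eigenvectorBasis.orthonormal i j

lemma eigenvectorBasis_dotProduct_mulVec (i : n) (x : n → ℝ) :
    ⇑(hA.eigenvectorBasis i) ⬝ᵥ (A *ᵥ x) =
      hA.eigenvalues i * (⇑(hA.eigenvectorBasis i) ⬝ᵥ x) := by
  rw [dotProduct_mulVec, ← mulVec_transpose, show Aᵀ = A from hA, mulVec_eigenvectorBasis,
    smul_dotProduct, smul_eq_mul]

lemma dotProduct_eq_sum_eigenvectorBasis (x y : n → ℝ) :
    x ⬝ᵥ y =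
      ∑ i, (⇑(hA.eigenvectorBasis i) ⬝ᵥ x) * (⇑(hA.eigenvectorBasis i) ⬝ᵥ y) := by
  have := hA.eigenvectorBasis.sum_inner_mul_inner (WithLp.toLp 2 x) (WithLp.toLp 2 y)
  simp only [EuclideanSpace.inner_eq_star_dotProduct, star_trivial] at this
  rw [dotProduct_comm, ← this]
  exact Finset.sum_congr rfl fun i _ => by rw [dotProduct_comm y]

lemma exists_eigenvalues_gt_of_lt_dotProduct_mulVec {c : ℝ} {v : n → ℝ}
    (hv : c * (v ⬝ᵥ v) < v ⬝ᵥ (A *ᵥ v)) : ∃ i, c < hA.eigenvalues i := by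
  by_contra! h
  simp only [hA.dotProduct_eq_sum_eigenvectorBasis v, eigenvectorBasis_dotProduct_mulVec,
    Finset.mul_sum] at hv
  refine hv.not_ge (Finset.sum_le_sum fun i _ => ?_)
  nlinarith [h i, sq_nonneg (⇑(hA.eigenvectorBasis i) ⬝ᵥ v)]

lemma dotProduct_mulVec_add_smul_eigenvectorBasis {i j : n} (hij : i ≠ j) (a b : ℝ) :
    let x := a • ⇑(hA.eigenvectorBasis i) + b • ⇑(hA.eigenvectorBasis j)
    x ⬝ᵥ (A *ᵥ x) = hA.eigenvalues i * a ^ 2 + hA.eigenvalues j * b ^ 2 ∧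
      x ⬝ᵥ x = a ^ 2 + b ^ 2 := by
  simp only [mulVec_add, mulVec_smul, mulVec_eigenvectorBasis, add_dotProduct, dotProduct_add,
    smul_dotProduct, dotProduct_smul, dotProduct_eigenvectorBasis, hij, hij.symm, if_true,
    if_false, smul_eq_mul]
  constructor <;> ring

lemma eigenvalues_lt_of_forall_dotProduct_mulVec_lt {c : ℝ} {z : n}
    (h : ∀ x : n → ℝ, x ≠ 0 → x z = 0 → x ⬝ᵥ (A *ᵥ x) < c * (x ⬝ᵥ x))
    {i j : n} (hij : i ≠ j) (hi : c ≤ hA.eigenvalues i) : hA.eigenvalues j < c := by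
  by_contra! hj
  obtain ⟨a, b, hab, hz⟩ : ∃ a b : ℝ, (a ≠ 0 ∨ b ≠ 0) ∧
      a * hA.eigenvectorBasis i z + b * hA.eigenvectorBasis j z = 0 := by
    by_cases hu : hA.eigenvectorBasis i z = 0
    · exact ⟨1, 0, Or.inl one_ne_zero, by simp [hu]⟩
    · exact ⟨hA.eigenvectorBasis j z, _, Or.inr (neg_ne_zero.mpr hu), by ring⟩
  obtain ⟨hquad, hnorm⟩ := hA.dotProduct_mulVec_add_smul_eigenvectorBasis hij a b
  have hpos : 0 < a ^ 2 + b ^ 2 := by rcases hab with hab | hab <;> positivity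
  have hx : a • ⇑(hA.eigenvectorBasis i) + b • ⇑(hA.eigenvectorBasis j) ≠ 0 := by
    intro h0
    rw [h0, zero_dotProduct] at hnorm
    linarith
  have := h _ hx (by simpa using hz)
  rw [hquad, hnorm] at this
  nlinarith

theorem exists_eigenvalues_gt_and_forall_ne_lt {c : ℝ} {z : n} {v : n → ℝ}
    (hv : c * (v ⬝ᵥ v) < v ⬝ᵥ (A *ᵥ v))
    (h : ∀ x : n → ℝ, x ≠ 0 → x z = 0 → x ⬝ᵥ (A *ᵥ x) < c * (x ⬝ᵥ x)) :
    ∃ i, c < hA.eigenvalues i ∧ ∀ j, j ≠ i → hA.eigenvalues j < c :=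
  let ⟨i, hi⟩ := hA.exists_eigenvalues_gt_of_lt_dotProduct_mulVec hv
  ⟨i, hi, fun _ hji => hA.eigenvalues_lt_of_forall_dotProduct_mulVec_lt h hji.symm hi.le⟩

end Matrix.IsHermitian

open Classical in
lemma dotProduct_adjMat_fromRel_mulVec {V : Type*} [Fintype V] [DecidableEq V]
    (r : V → V → Prop) (hr : ∀ a b, r a b → ¬ r b a) (x : V → ℝ) :
    x ⬝ᵥ (adjMat (SimpleGraph.fromRel r) *ᵥ x) =
      2 * ∑ a, ∑ b, if r a b then x a * x b else 0 := by
  have hsplit : ∀ a b, (if (SimpleGraph.fromRel r).Adj a b then x a * x b else 0) =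
      (if r a b then x a * x b else 0) + (if r b a then x b * x a else 0) := by
    intro a b
    by_cases hab : r a b
    · have hne : a ≠ b := by rintro rfl; exact hr a a hab hab
      simp [hab, hr a b hab, hne]
    · by_cases hba : r b a
      · have hne : a ≠ b := by rintro rfl; exact hab hba
        simp [hab, hba, hne, mul_comm]
      · simp [hab, hba]
  calc x ⬝ᵥ (adjMat (SimpleGraph.fromRel r) *ᵥ x)
      = ∑ a, ∑ b, if (SimpleGraph.fromRel r).Adj a b then x a * x b else 0 := by
        simp [adjMat, dotProduct, mulVec, Finset.mul_sum]
    _ = 2 * ∑ a, ∑ b, if r a b then x a * x b else 0 := by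
        simp only [hsplit, Finset.sum_add_distrib]
        rw [Finset.sum_comm (f := fun a b => if r b a then x b * x a else 0)]
        ring

lemma Fin.val_add_one_eq_mod {n : ℕ} [NeZero n] (i : Fin n) :
    ((i + 1 : Fin n) : ℕ) = (i + 1) % n := by
  rw [Fin.val_add, Fin.val_one', Nat.add_mod_mod]

lemma Fin.add_one_add_one_ne_self {n : ℕ} [NeZero n] (hn : 2 < n) (i : Fin n) :
    i + 1 + 1 ≠ i := by
  rw [Ne, add_assoc, add_eq_left, Fin.ext_iff, Fin.val_add, Fin.val_one', Fin.val_zero,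
    Nat.mod_eq_of_lt (by omega : 1 < n), Nat.mod_eq_of_lt (by omega : 1 + 1 < n)]
  omega

open Fin.NatCast in
lemma Fin.apply_eq_apply_zero_of_forall_add_one {n : ℕ} [NeZero n] {α : Type*} {f : Fin n → α}
    (h : ∀ i, f (i + 1) = f i) (i : Fin n) : f i = f 0 := by
  have hm : ∀ m : ℕ, f (m : Fin n) = f 0 := fun m => by
    induction m with
    | zero => rw [Nat.cast_zero]
    | succ m ih => rw [Nat.cast_succ, h, ih]
  simpa using hm i

lemma Fin.sum_ite_val_eq {k : ℕ} (f : Fin k → ℝ) (n : ℕ) :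
    ∑ j : Fin k, (if (j : ℕ) = n then f j else 0) = if h : n < k then f ⟨n, h⟩ else 0 := by
  split_ifs with h
  · rw [Finset.sum_eq_single ⟨n, h⟩ (fun j _ hj => if_neg fun e => hj (Fin.ext e))
      (by simp), if_pos rfl]
  · exact Finset.sum_eq_zero fun j _ => if_neg fun (e : (j : ℕ) = n) => h (e ▸ j.isLt)

lemma Nat.apply_eq_apply_zero_of_forall_lt_succ {α : Type*} {w : ℕ → α} {m : ℕ}
    (h : ∀ t < m, w (t + 1) = w t) : ∀ t ≤ m, w t = w 0 := by
  intro t ht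
  induction t with
  | zero => rfl
  | succ t ih => rw [h t (by omega), ih (by omega)]

lemma Finset.forall_eq_of_sum_sq_sub_eq_zero {ι : Type*} {s : Finset ι} {f g : ι → ℝ}
    (h : ∑ i ∈ s, (f i - g i) ^ 2 = 0) : ∀ i ∈ s, f i = g i := fun i hi =>
  sub_eq_zero.mp <| (pow_eq_zero_iff two_ne_zero).mp <|
    (sum_eq_zero_iff_of_nonneg fun _ _ => sq_nonneg _).mp h i hi

lemma Equiv.Perm.sum_sq_sub_apply {ι : Type*} [Fintype ι] (σ : Equiv.Perm ι) (y : ι → ℝ) :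
    ∑ i, (y i - y (σ i)) ^ 2 = 2 * ∑ i, y i ^ 2 - 2 * ∑ i, y i * y (σ i) := by
  have h : ∑ i, y (σ i) ^ 2 = ∑ i, y i ^ 2 := Equiv.sum_comp σ (fun i => y i ^ 2)
  simp only [sub_sq, Finset.sum_add_distrib, Finset.sum_sub_distrib, h, mul_assoc,
    ← Finset.mul_sum]
  ring

lemma Finset.sum_range_sq_sub_succ (w : ℕ → ℝ) (m : ℕ) :
    ∑ t ∈ range m, (w t - w (t + 1)) ^ 2 =
      w 0 ^ 2 - w m ^ 2 + 2 * ∑ t ∈ range m, w (t + 1) ^ 2 -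
        2 * ∑ t ∈ range m, w t * w (t + 1) := by
  induction m with
  | zero => simp
  | succ m ih => rw [sum_range_succ, ih, sum_range_succ, sum_range_succ]; ring

section Lollipop

variable {p k : ℕ} [NeZero p]

/-- The values of `x` along the tail of `L(p,k)`, starting at the cycle vertex `0` that carries
it, and extended by `0` past its end. -/
def lollipopTail (x : Fin p ⊕ Fin k → ℝ) : ℕ → ℝ
  | 0 => x (.inl 0)
  | t + 1 => if h : t < k then x (.inr ⟨t, h⟩) else 0

lemma lollipopTail_succ (x : Fin p ⊕ Fin k → ℝ) (t : ℕ) :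
    lollipopTail x (t + 1) = if h : t < k then x (.inr ⟨t, h⟩) else 0 := rfl

lemma lollipop_dotProduct_mulVec (hp : 3 ≤ p) (x : Fin p ⊕ Fin k → ℝ) :
    x ⬝ᵥ (adjMat (lollipop p k) *ᵥ x) = 2 * (∑ i, x (.inl i) * x (.inl (i + 1)) +
      ∑ t ∈ Finset.range (k + 1), lollipopTail x t * lollipopTail x (t + 1)) := by
  -- `hcross` and `hpath` use the forms of the conditions that `simp` rewrites to below: only a
  -- rewritten condition loses the classical `Decidable` instance inherited from `adjMat`.
  have hcross : ∑ i : Fin p, ∑ j : Fin k,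
      (if i = 0 ∧ (j : ℕ) = 0 then x (.inl i) * x (.inr j) else 0) =
      lollipopTail x 0 * lollipopTail x 1 := by
    rw [Fintype.sum_eq_single 0 fun i hi => by simp [hi]]
    simp only [true_and, Fin.sum_ite_val_eq, lollipopTail, mul_dite, mul_zero]
  have hpath : ∑ i : Fin k, ∑ j : Fin k,
      (if (j : ℕ) = i + 1 then x (.inr i) * x (.inr j) else 0) =
      ∑ t ∈ Finset.range k, lollipopTail x (t + 1) * lollipopTail x (t + 1 + 1) := by
    simp only [← mul_ite_zero, ← Finset.mul_sum, Fin.sum_ite_val_eq, ← lollipopTail_succ]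
    rw [← Fin.sum_univ_eq_sum_range
      (fun t => lollipopTail x (t + 1) * lollipopTail x (t + 1 + 1))]
    simp [lollipopTail_succ]
  rw [lollipop, dotProduct_adjMat_fromRel_mulVec]
  · simp only [Fintype.sum_sum_type, ← Fin.val_add_one_eq_mod, ← Fin.ext_iff,
      Finset.sum_ite_eq, Finset.mem_univ, if_true, if_false, Finset.sum_const_zero, Finset.sum_range_succ',
      Finset.sum_add_distrib, zero_add, Fin.val_eq_zero_iff,
      eq_comm (a := ((_ : Fin _) : ℕ) + 1), hcross, hpath]
    ring
  · rintro (i | i) (j | j) <;> simp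
    · rw [← Fin.val_add_one_eq_mod, ← Fin.val_add_one_eq_mod, ← Fin.ext_iff, ← Fin.ext_iff]
      rintro rfl
      exact Fin.add_one_add_one_ne_self hp i
    · omega

lemma lollipop_dotProduct_self (x : Fin p ⊕ Fin k → ℝ) :
    x ⬝ᵥ x = ∑ i, x (.inl i) ^ 2 + ∑ t ∈ Finset.range k, lollipopTail x (t + 1) ^ 2 := by
  rw [← Fin.sum_univ_eq_sum_range (fun t => lollipopTail x (t + 1) ^ 2)]
  simp [dotProduct, Fintype.sum_sum_type, lollipopTail_succ, sq]

lemma lollipop_two_mul_dotProduct_self_sub (hp : 3 ≤ p) (x : Fin p ⊕ Fin k → ℝ) :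
    2 * (x ⬝ᵥ x) - x ⬝ᵥ (adjMat (lollipop p k) *ᵥ x) =
      ∑ i, (x (.inl i) - x (.inl (i + 1))) ^ 2 +
        ∑ t ∈ Finset.range (k + 1), (lollipopTail x t - lollipopTail x (t + 1)) ^ 2 -
          x (.inl 0) ^ 2 := by
  have hcycle := (Equiv.addRight (1 : Fin p)).sum_sq_sub_apply (x ∘ .inl)
  have htail := Finset.sum_range_sq_sub_succ (lollipopTail x) (k + 1)
  have hend : lollipopTail x (k + 1) = 0 := by simp [lollipopTail_succ]
  simp only [Function.comp_apply, Equiv.coe_addRight] at hcycle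
  rw [Finset.sum_range_succ (fun t => lollipopTail x (t + 1) ^ 2), hend] at htail
  rw [lollipop_dotProduct_mulVec hp, lollipop_dotProduct_self, hcycle, htail]
  simp only [lollipopTail]
  ring

lemma lollipop_dotProduct_mulVec_lt (hp : 3 ≤ p) {x : Fin p ⊕ Fin k → ℝ} (hx : x ≠ 0)
    (h0 : x (.inl 0) = 0) : x ⬝ᵥ (adjMat (lollipop p k) *ᵥ x) < 2 * (x ⬝ᵥ x) := by
  rw [← sub_pos, lollipop_two_mul_dotProduct_self_sub hp, h0]
  set w := lollipopTail x
  have hcycle := Finset.sum_nonneg fun i (_ : i ∈ Finset.univ) =>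
    sq_nonneg (x (.inl i) - x (.inl (i + 1)))
  have htail := Finset.sum_nonneg fun t (_ : t ∈ Finset.range (k + 1)) =>
    sq_nonneg (w t - w (t + 1))
  by_contra! hle
  have hcycle0 : ∀ i, x (.inl (i + 1)) = x (.inl i) := fun i =>
    (Finset.forall_eq_of_sum_sq_sub_eq_zero (by linarith) i (Finset.mem_univ _)).symm
  have htail0 : ∀ t < k + 1, w (t + 1) = w t := fun t ht =>
    (Finset.forall_eq_of_sum_sq_sub_eq_zero (by linarith) t (Finset.mem_range.mpr ht)).symm
  refine hx (funext fun v => ?_)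
  rcases v with i | j
  · exact (Fin.apply_eq_apply_zero_of_forall_add_one (f := x ∘ .inl) hcycle0 i).trans h0
  · have := Nat.apply_eq_apply_zero_of_forall_lt_succ htail0 (j + 1) (by omega)
    simpa [w, lollipopTail_succ, lollipopTail, h0] using this

lemma lollipop_exists_dotProduct_mulVec_gt (hp : 3 ≤ p) (hk : 1 ≤ k) :
    ∃ v : Fin p ⊕ Fin k → ℝ,
      2 * (v ⬝ᵥ v) < v ⬝ᵥ (adjMat (lollipop p k) *ᵥ v) := by
  obtain ⟨m, rfl⟩ := Nat.exists_eq_add_of_le' hk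
  set v : Fin p ⊕ Fin (m + 1) → ℝ := Sum.elim 1 fun _ => 1 / 2
  have hmid : ∑ t ∈ Finset.range m,
      (lollipopTail v (t + 1) - lollipopTail v (t + 1 + 1)) ^ 2 = 0 :=
    Finset.sum_eq_zero fun t ht => by
      simp [v, lollipopTail_succ, (Finset.mem_range.mp ht).le, Finset.mem_range.mp ht]
  refine ⟨v, ?_⟩
  rw [← sub_neg, lollipop_two_mul_dotProduct_self_sub hp, Finset.sum_range_succ,
    Finset.sum_range_succ', hmid]
  norm_num [v, lollipopTail]

end Lollipop

/-- For `p ≥ 3` and `k ≥ 1`, the largest eigenvalue of the lollipop `L(p,k)` is strictly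
greater than `2` and all its other eigenvalues (in particular the second largest one)
are strictly less than `2`. -/
theorem lollipop_second_eigenvalue_lt_two (p k : ℕ) (hp : 3 ≤ p) (hk : 1 ≤ k)
    (hA : (adjMat (lollipop p k)).IsHermitian) :
    ∃ i, 2 < hA.eigenvalues i ∧ ∀ j, j ≠ i → hA.eigenvalues j < 2 := by
  have : NeZero p := ⟨by omega⟩
  obtain ⟨v, hv⟩ := lollipop_exists_dotProduct_mulVec_gt hp hk
  exact hA.exists_eigenvalues_gt_and_forall_ne_lt hv fun x hx h0 =>
    lollipop_dotProduct_mulVec_lt hp hx h0
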